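/- Let P be an induced path on k ≥ 3 vertices in a finite simple graph G with endpoints x and y, and let H = G + xy − I[P] with I[P] = N[in(P)] \ {x,y}. Then there exists an induced path on k+2 vertices in G containing P as an internal path if and only if there exists an induced P₄ in H having xy as its middle edge. -/

import Mathlib

open SimpleGraph

/-- `a, x, y, b` form an induced `P₄` having `xy` as its middle edge
(the adjacency `G.Adj x y` is recorded separately as `xy` being an edge). -/
def IsMiddleP4 {V : Type*} (G : SimpleGraph V) (x y a b : V) : Prop :=
  G.Adj a x ∧ G.Adj y b ∧ ¬ G.Adj a y ∧ ¬ G.Adj x b ∧ ¬ G.Adj a b ∧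
    a ≠ y ∧ b ≠ x ∧ a ≠ b

/-- A closed walk is an induced cycle if it is a cycle and every adjacency
between vertices on it is an edge of the cycle. -/
def IsInducedCycle {V : Type*} (G : SimpleGraph V) {v : V} (c : G.Walk v v) : Prop :=
  c.IsCycle ∧ ∀ a ∈ c.support, ∀ b ∈ c.support, G.Adj a b → s(a, b) ∈ c.edges

/-- An edge `xy` is avoidable if every induced `P₄` `a,x,y,b` with middle edge
`xy` is contained in an induced cycle. -/
def AvoidableEdge {V : Type*} (G : SimpleGraph V) (x y : V) : Prop :=
  ∀ a b : V, IsMiddleP4 G x y a b →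
    ∃ (v : V) (c : G.Walk v v), IsInducedCycle G c ∧
      a ∈ c.support ∧ x ∈ c.support ∧ y ∈ c.support ∧ b ∈ c.support

/-- A walk is an induced path if it is a path and every adjacency between its
vertices is an edge of the path. -/
def IsInducedPath {V : Type*} (G : SimpleGraph V) {x y : V} (p : G.Walk x y) : Prop :=
  p.IsPath ∧ ∀ a ∈ p.support, ∀ b ∈ p.support, G.Adj a b → s(a, b) ∈ p.edges

/-- An induced path `P` (with endpoints `x, y`) is avoidable if every induced
path on two more vertices containing `P` as an internal path is contained in
an induced cycle. -/
def AvoidablePath {V : Type*} (G : SimpleGraph V) {x y : V} (p : G.Walk x y) : Prop :=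
  ∀ (a b : V) (hax : G.Adj a x) (hyb : G.Adj y b),
    IsInducedPath G ((SimpleGraph.Walk.cons hax p).concat hyb) →
    ∃ (v : V) (c : G.Walk v v), IsInducedCycle G c ∧
      ∀ w ∈ ((SimpleGraph.Walk.cons hax p).concat hyb).support, w ∈ c.support

/-- `I[P] = N[in(P)] \ {x, y}`: the internal vertices of `P` together with all
their neighbors other than the endpoints `x, y`. -/
def pathClosure {V : Type*} (G : SimpleGraph V) {x y : V} (p : G.Walk x y) : Set V :=
  {v | v ≠ x ∧ v ≠ y ∧ ∃ w ∈ p.support, w ≠ x ∧ w ≠ y ∧ (v = w ∨ G.Adj w v)}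

/-!
Both sides are conditions on the same pair `a, b`. The walk `a·P·b` is an induced path iff
`a, b` are off `P`, `a ≁ b`, and the only neighbour of `a` (resp. `b`) on `P` is `x` (resp. `y`).
For a neighbour `a` of `x`, "off `P` and adjacent to no other vertex of `P`" says exactly that
`a ∉ I[P]`, `a ≠ y` and `a ≁ y`; so the conditions become "`a, b ∉ I[P]` and `a, x, y, b` is an
induced `P₄`". Once `x ≠ y`, adding the edge `xy` does not affect whether `a, x, y, b` is an
induced `P₄`, nor does passing to an induced subgraph containing the four vertices.
-/

section

variable {V : Type*} {G : SimpleGraph V}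

theorem isInducedPath_reverse_iff {x y : V} (p : G.Walk x y) :
    IsInducedPath G p.reverse ↔ IsInducedPath G p := by
  simp [IsInducedPath, Walk.isPath_reverse_iff, Walk.support_reverse, Walk.edges_reverse]

theorem isInducedPath_cons_iff {a x y : V} (hax : G.Adj a x) (p : G.Walk x y) :
    IsInducedPath G (Walk.cons hax p) ↔
      IsInducedPath G p ∧ a ∉ p.support ∧ ∀ v ∈ p.support, G.Adj a v → v = x := by
  simp only [IsInducedPath, Walk.cons_isPath_iff, Walk.support_cons, Walk.edges_cons,
    List.mem_cons]
  constructor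
  · rintro ⟨⟨hpath, haP⟩, hind⟩
    refine ⟨⟨hpath, fun u hu v hv huv => ?_⟩, haP, fun v hv hav => ?_⟩
    · refine (hind u (.inr hu) v (.inr hv) huv).resolve_left fun he => ?_
      rcases Sym2.eq_iff.mp he with ⟨rfl, -⟩ | ⟨-, rfl⟩ <;> exact haP ‹_›
    · rcases hind a (.inl rfl) v (.inr hv) hav with he | he
      · exact Sym2.congr_right.mp he
      · exact absurd (Walk.fst_mem_support_of_mem_edges p he) haP
  · rintro ⟨⟨hpath, hind⟩, haP, hN⟩
    refine ⟨⟨hpath, haP⟩, ?_⟩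
    rintro u (rfl | hu) v (rfl | hv) huv
    · exact absurd huv (G.loopless.irrefl _)
    · exact .inl (by rw [hN v hv huv])
    · exact .inl (by rw [hN u hu huv.symm, Sym2.eq_swap])
    · exact .inr (hind u hu v hv huv)

theorem isInducedPath_cons_concat_iff {a b x y : V} {p : G.Walk x y} (hp : IsInducedPath G p)
    (hax : G.Adj a x) (hyb : G.Adj y b) :
    IsInducedPath G ((Walk.cons hax p).concat hyb) ↔
      (a ∉ p.support ∧ ∀ v ∈ p.support, G.Adj a v → v = x) ∧
        (b ∉ p.support ∧ ∀ v ∈ p.support, G.Adj b v → v = y) ∧ a ≠ b ∧ ¬ G.Adj a b := by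
  rw [← isInducedPath_reverse_iff, Walk.reverse_concat, isInducedPath_cons_iff,
    isInducedPath_reverse_iff, isInducedPath_cons_iff]
  simp only [hp, Walk.support_reverse, Walk.support_cons, List.mem_reverse, List.mem_cons,
    true_and, not_or, forall_eq_or_imp]
  constructor
  · rintro ⟨⟨haP, hNa⟩, ⟨hba, hbP⟩, hba', hNb⟩
    exact ⟨⟨haP, hNa⟩, ⟨hbP, hNb⟩, Ne.symm hba,
      fun hab => haP (hba' hab.symm ▸ Walk.end_mem_support p)⟩
  · rintro ⟨⟨haP, hNa⟩, ⟨hbP, hNb⟩, hab, hnab⟩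
    exact ⟨⟨haP, hNa⟩, ⟨Ne.symm hab, hbP⟩, fun hba => absurd hba.symm hnab, hNb⟩

theorem pathClosure_reverse {x y : V} (p : G.Walk x y) :
    pathClosure G p.reverse = pathClosure G p := by
  ext v
  simp only [pathClosure, Walk.support_reverse, List.mem_reverse, Set.mem_ofPred_eq]
  constructor <;>
    exact fun ⟨h₁, h₂, w, hw, hw₁, hw₂, h⟩ => ⟨h₂, h₁, w, hw, hw₂, hw₁, h⟩

theorem notMem_pathClosure_iff {a x y : V} {p : G.Walk x y} (hxy : x ≠ y) (hax : G.Adj a x) :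
    a ∉ pathClosure G p ∧ a ≠ y ∧ ¬ G.Adj a y ↔
      a ∉ p.support ∧ ∀ v ∈ p.support, G.Adj a v → v = x := by
  constructor
  · rintro ⟨hcl, hay, hnay⟩
    have hinner : ∀ w ∈ p.support, w ≠ x → w ≠ y → a ≠ w ∧ ¬ G.Adj w a :=
      fun w hw hwx hwy => not_or.mp fun h => hcl ⟨hax.ne, hay, w, hw, hwx, hwy, h⟩
    refine ⟨fun haP => (hinner a haP hax.ne hay).1 rfl, fun v hv hav => ?_⟩
    by_contra hvx
    obtain rfl | hvy := eq_or_ne v y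
    · exact hnay hav
    · exact (hinner v hv hvx hvy).2 hav.symm
  · rintro ⟨haP, hN⟩
    refine ⟨?_, fun hay => haP (hay ▸ p.end_mem_support),
      fun hay => hxy (hN y p.end_mem_support hay).symm⟩
    rintro ⟨-, -, w, hw, hwx, -, rfl | hwa⟩
    · exact haP hw
    · exact hwx (hN w hw hwa.symm)

theorem isInducedPath_cons_concat_iff_isMiddleP4 {a b x y : V} {p : G.Walk x y}
    (hp : IsInducedPath G p) (hxy : x ≠ y) (hax : G.Adj a x) (hyb : G.Adj y b) :
    IsInducedPath G ((Walk.cons hax p).concat hyb) ↔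
      a ∉ pathClosure G p ∧ b ∉ pathClosure G p ∧ IsMiddleP4 G x y a b := by
  have hb := notMem_pathClosure_iff hxy.symm hyb.symm (p := p.reverse)
  simp only [Walk.support_reverse, List.mem_reverse, pathClosure_reverse] at hb
  rw [isInducedPath_cons_concat_iff hp, ← notMem_pathClosure_iff hxy hax, ← hb]
  simp only [IsMiddleP4, hax, hyb, G.adj_comm b x, true_and]
  tauto

theorem isMiddleP4_induce_iff {s : Set V} {x y a b : s} :
    IsMiddleP4 (G.induce s) x y a b ↔ IsMiddleP4 G x y a b := by
  simp [IsMiddleP4, Subtype.coe_injective.ne_iff]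

theorem isMiddleP4_sup_edge_iff {x y a b : V} (hxy : x ≠ y) :
    IsMiddleP4 (G ⊔ fromEdgeSet {s(x, y)}) x y a b ↔ IsMiddleP4 G x y a b := by
  simp only [IsMiddleP4, sup_adj, fromEdgeSet_adj, Set.mem_singleton_iff, Sym2.eq_iff]
  constructor <;> rintro ⟨h₁, h₂, h₃, h₄, h₅, hay, hbx, hab⟩ <;>
    refine ⟨?_, ?_, ?_, ?_, ?_, hay, hbx, hab⟩ <;> grind [G.ne_of_adj]

end

theorem exists_extension_iff_exists_middleP4_general {V : Type*}
    (G : SimpleGraph V) (x y : V) (p : G.Walk x y)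
    (hp : IsInducedPath G p) (hk : 2 ≤ p.length) :
    (∃ (a b : V) (hax : G.Adj a x) (hyb : G.Adj y b),
        IsInducedPath G ((SimpleGraph.Walk.cons hax p).concat hyb)) ↔
      (∃ a b : ((pathClosure G p)ᶜ : Set V),
        IsMiddleP4 ((G ⊔ fromEdgeSet {s(x, y)}).induce (pathClosure G p)ᶜ)
          ⟨x, fun h => h.1 rfl⟩ ⟨y, fun h => h.2.1 rfl⟩ a b) := by
  have hxy : x ≠ y := by
    rintro rfl
    have := (Walk.isPath_iff_nil.mp hp.1).length_eq_zero
    omega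
  constructor
  · rintro ⟨a, b, hax, hyb, hext⟩
    obtain ⟨ha, hb, hP4⟩ := (isInducedPath_cons_concat_iff_isMiddleP4 hp hxy hax hyb).mp hext
    exact ⟨⟨a, ha⟩, ⟨b, hb⟩, isMiddleP4_induce_iff.mpr ((isMiddleP4_sup_edge_iff hxy).mpr hP4)⟩
  · rintro ⟨⟨a, ha⟩, ⟨b, hb⟩, hH⟩
    have hP4 := (isMiddleP4_sup_edge_iff hxy).mp (isMiddleP4_induce_iff.mp hH)
    exact ⟨a, b, hP4.1, hP4.2.1,
      (isInducedPath_cons_concat_iff_isMiddleP4 hp hxy hP4.1 hP4.2.1).mpr ⟨ha, hb, hP4⟩⟩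

/-- There is an induced path on `k + 2` vertices in `G` containing `P` (an
induced path on `k ≥ 3` vertices with endpoints `x, y`) as an internal path iff
there is an induced `P₄` in `H = G + xy − I[P]` having `xy` as its middle edge. -/
theorem exists_extension_iff_exists_middleP4 {V : Type*} [Fintype V]
    (G : SimpleGraph V) (x y : V) (p : G.Walk x y)
    (hp : IsInducedPath G p) (hk : 2 ≤ p.length) :
    (∃ (a b : V) (hax : G.Adj a x) (hyb : G.Adj y b),
        IsInducedPath G ((SimpleGraph.Walk.cons hax p).concat hyb)) ↔
      (∃ a b : ((pathClosure G p)ᶜ : Set V),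
        IsMiddleP4 ((G ⊔ fromEdgeSet {s(x, y)}).induce (pathClosure G p)ᶜ)
          ⟨x, fun h => h.1 rfl⟩ ⟨y, fun h => h.2.1 rfl⟩ a b) :=
  exists_extension_iff_exists_middleP4_general G x y p hp hk
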